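/- arXiv:math/0505296 — 4 statements merged into one kernel-verified Lean document; each statement's English description precedes it below -/
import Mathlib

section
/- In the ring A_{d,n} = Z[δ_S : S ⊆ N, |S| ≥ 2]/I_{d,n}, where N = {1,…,n} and I_{d,n} is generated by (i) δ_S δ_T = 0 whenever S ∩ T is nonempty and is a proper subset of both S and T, and (ii) (Σ_{a,b ∈ S} δ_S)^d = 0 for all pairs of distinct elements a,b ∈ N, the following holds: for any S ⊊ N with |S| ≥ 2, δ_S · δ_N^{d(n-|S|)} = 0. -/
/-!
Descending induction on `S`. Pick `a ∈ S` and `b ∉ S`, and split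
`Σ_{ab} = δ_N + X` with `X = Σ_{T ∋ a, b, T ≠ N} δ_T`. Every summand of `X` is killed by
`y = δ_S · δ_N^{d(|N \ S| - 1)}`: if `S ⊄ T` then `δ_S δ_T = 0` by the first relation, and if
`S ⊊ T ⊊ N` then `δ_T δ_N^{d |N \ T|}` already vanishes by induction. Hence
`y · δ_N^d = y · (Σ_{ab} - X)^d = y · Σ_{ab}^d = 0`.
-/

open Finset

theorem mul_add_pow_of_mul_eq_zero {R : Type*} [CommSemiring R] {y x : R} (a : R)
    (h : y * x = 0) (k : ℕ) : y * (a + x) ^ k = y * a ^ k := by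
  induction k with
  | zero => simp
  | succ k ih =>
    calc y * (a + x) ^ (k + 1) = y * (a + x) ^ k * (a + x) := by rw [pow_succ, mul_assoc]
      _ = y * a ^ k * a + a ^ k * (y * x) := by rw [ih]; ring
      _ = y * a ^ (k + 1) := by rw [h, mul_zero, add_zero, pow_succ, mul_assoc]

section ChowRelations

variable {α R : Type*} [Fintype α] [DecidableEq α] [CommRing R] {δ : Finset α → R}

theorem delta_mul_sum_mul_pow_eq_zero
    (hrel1 : ∀ S T : Finset α, 2 ≤ #S → 2 ≤ #T →
      (S ∩ T).Nonempty → S ∩ T ⊂ S → S ∩ T ⊂ T → δ S * δ T = 0)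
    {S : Finset α} (hS : 2 ≤ #S) {a b : α} (ha : a ∈ S) (hb : b ∉ S) {e : ℕ}
    (ih : ∀ T, S ⊂ T → T ≠ univ → δ T * δ univ ^ e = 0) :
    δ S * (∑ T ∈ (univ.filter fun T : Finset α => a ∈ T ∧ b ∈ T).erase univ, δ T) *
      δ univ ^ e = 0 := by
  rw [mul_sum, sum_mul]
  refine sum_eq_zero fun T hT => ?_
  obtain ⟨hTu, -, haT, hbT⟩ : T ≠ univ ∧ T ∈ univ ∧ a ∈ T ∧ b ∈ T := by
    simpa only [mem_erase, mem_filter] using hT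
  by_cases hST : S ⊆ T
  · have hSsT : S ⊂ T := ssubset_of_subset_of_ne hST fun h => hb (h ▸ hbT)
    rw [mul_assoc, ih T hSsT hTu, mul_zero]
  · have hT : 2 ≤ #T := one_lt_card.mpr ⟨a, haT, b, hbT, fun h => hb (h ▸ ha)⟩
    have hinter : (S ∩ T).Nonempty := ⟨a, mem_inter.mpr ⟨ha, haT⟩⟩
    have hinterS : S ∩ T ⊂ S := inf_lt_left.mpr hST
    have hinterT : S ∩ T ⊂ T := inf_lt_right.mpr fun h => hb (h hbT)
    rw [hrel1 S T hS hT hinter hinterS hinterT, zero_mul]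

theorem delta_mul_delta_univ_pow_card_compl_eq_zero (d : ℕ)
    (hrel1 : ∀ S T : Finset α, 2 ≤ #S → 2 ≤ #T →
      (S ∩ T).Nonempty → S ∩ T ⊂ S → S ∩ T ⊂ T → δ S * δ T = 0)
    (hrel2 : ∀ a b : α, a ≠ b →
      (∑ S ∈ univ.filter (fun S : Finset α => a ∈ S ∧ b ∈ S), δ S) ^ d = 0)
    (S : Finset α) (hSu : S ≠ univ) (hS : 2 ≤ #S) :
    δ S * δ univ ^ (d * #Sᶜ) = 0 := by
  induction S using WellFoundedGT.induction with
  | _ S ih =>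
  obtain ⟨a, ha⟩ : S.Nonempty := card_pos.mp (by omega)
  obtain ⟨b, hb⟩ : ∃ b, b ∉ S := by simpa [eq_univ_iff_forall] using hSu
  obtain ⟨k, hk⟩ : ∃ k, #Sᶜ = k + 1 :=
    Nat.exists_eq_add_one.mpr (card_pos.mpr ⟨b, mem_compl.mpr hb⟩)
  set F := univ.filter fun T : Finset α => a ∈ T ∧ b ∈ T
  set X := ∑ T ∈ F.erase univ, δ T
  have hsplit : ∑ T ∈ F, δ T = δ univ + X := (add_sum_erase F δ (by simp [F])).symm
  have hkill : δ S * δ univ ^ (d * k) * X = 0 := by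
    rw [mul_right_comm]
    refine delta_mul_sum_mul_pow_eq_zero hrel1 hS ha hb fun T hST hTu => ?_
    have hcard : #Tᶜ ≤ k := by
      have := card_lt_card (compl_ssubset_compl.mpr hST)
      omega
    obtain ⟨c, hc⟩ := pow_dvd_pow (δ univ) (Nat.mul_le_mul_left d hcard)
    rw [hc, ← mul_assoc, ih T hST hTu (hS.trans (card_le_card hST.subset)), zero_mul]
  calc δ S * δ univ ^ (d * #Sᶜ) = δ S * δ univ ^ (d * k) * (δ univ + X) ^ d := by
        rw [mul_add_pow_of_mul_eq_zero _ hkill, hk, mul_add_one, pow_add, mul_assoc]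
    _ = 0 := by rw [← hsplit, hrel2 a b fun h => hb (h ▸ ha), mul_zero]

end ChowRelations

theorem delta_deltaN_vanishing_general (d n : ℕ)
    {R : Type*} [CommRing R] (δ : Finset (Fin n) → R)
    (hrel1 : ∀ S T : Finset (Fin n), 2 ≤ S.card → 2 ≤ T.card →
      (S ∩ T).Nonempty → S ∩ T ⊂ S → S ∩ T ⊂ T → δ S * δ T = 0)
    (hrel2 : ∀ a b : Fin n, a ≠ b →
      (∑ S ∈ Finset.univ.filter (fun S : Finset (Fin n) => a ∈ S ∧ b ∈ S), δ S) ^ d = 0) :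
    ∀ S : Finset (Fin n), S ⊂ Finset.univ → 2 ≤ S.card →
      δ S * δ Finset.univ ^ (d * (n - S.card)) = 0 := by
  intro S hSu hS
  have h := delta_mul_delta_univ_pow_card_compl_eq_zero d hrel1 hrel2 S hSu.ne hS
  rwa [card_compl, Fintype.card_fin] at h

/-- In the Chow ring `A_{d,n} = ℤ[δ_S : S ⊆ N, |S| ≥ 2]/I_{d,n}` of `T_{d,n}`
(formalized universally: in any commutative ring with elements `δ S` satisfying the two
defining relations), for any `S ⊊ N` with `|S| ≥ 2` one has
`δ_S · δ_N^{d(n-|S|)} = 0`. -/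
theorem delta_deltaN_vanishing (d n : ℕ) (hd : 1 ≤ d) (hn : 2 ≤ n)
    {R : Type*} [CommRing R] (δ : Finset (Fin n) → R)
    (hrel1 : ∀ S T : Finset (Fin n), 2 ≤ S.card → 2 ≤ T.card →
      (S ∩ T).Nonempty → S ∩ T ⊂ S → S ∩ T ⊂ T → δ S * δ T = 0)
    (hrel2 : ∀ a b : Fin n, a ≠ b →
      (∑ S ∈ Finset.univ.filter (fun S : Finset (Fin n) => a ∈ S ∧ b ∈ S), δ S) ^ d = 0) :
    ∀ S : Finset (Fin n), S ⊂ Finset.univ → 2 ≤ S.card →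
      δ S * δ Finset.univ ^ (d * (n - S.card)) = 0 :=
  delta_deltaN_vanishing_general d n δ hrel1 hrel2
end

section
/- In the Chow ring A_{d,n} of T_{d,n}, if S, T ⊆ N with |S|, |T| ≥ 2 are disjoint, T ⊊ N, then δ_S · δ_T · δ_N^{d(n-|T|)-1} = 0. -/
/-!
Write `Σ_{st} = δ_N + ρ_{st}`, where `ρ_{st}` collects the `δ_V` with `s, t ∈ V ⊊ N`. Since
`Σ_{st}^d = 0` and `Σ_{st}^d ≡ δ_N^d` modulo `ρ_{st}`, a product `x · δ_N^e` vanishes as soon as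
`x · δ_V · δ_N^{e-d} = 0` for every such `V`. Taking `x = δ_U` with `t ∈ U ∌ s`, each `δ_U δ_V` is
either zero (`U ⊄ V`) or covered by downward induction on `U` (`U ⊊ V`); this gives
`δ_U δ_N^{d(n-|U|)} = 0`. Taking `x = δ_S δ_T` with `s ∈ S`, `t ∈ T`, the surviving `V` contain
`S ∪ T`, so `|V| ≥ |T| + 2` leaves one spare power of `δ_N`.
-/

open Finset

lemma mul_pow_eq_zero_of_mul_eq_zero_of_add_pow_eq_zero {R : Type*} [CommRing R] {x y r : R}
    {d : ℕ} (hxr : x * r = 0) (hd : (y + r) ^ d = 0) : x * y ^ d = 0 := by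
  obtain ⟨q, hq⟩ := sub_dvd_pow_sub_pow (y + r) y d
  rw [add_sub_cancel_left, hd, zero_sub] at hq
  linear_combination (-x) * hq - q * hxr

lemma mul_le_mul_sub_one_sub_of_add_two_le {a b d : ℕ} (h : a + 2 ≤ b) :
    d * a ≤ d * b - 1 - d := by
  obtain rfl | hd := d.eq_zero_or_pos
  · simp
  · have := Nat.mul_le_mul_left d h
    rw [Nat.mul_add] at this
    omega

section ChowRing

variable {n : ℕ} {R : Type*} [CommRing R] {δ : Finset (Fin n) → R}

lemma mul_eq_zero_of_not_nested
    (hrel1 : ∀ S T : Finset (Fin n), 2 ≤ S.card → 2 ≤ T.card →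
      (S ∩ T).Nonempty → S ∩ T ⊂ S → S ∩ T ⊂ T → δ S * δ T = 0)
    {U V : Finset (Fin n)} (hU : 2 ≤ #U) (hV : 2 ≤ #V) {a : Fin n} (haU : a ∈ U) (haV : a ∈ V)
    (hUV : ¬U ⊆ V) (hVU : ¬V ⊆ U) : δ U * δ V = 0 :=
  hrel1 U V hU hV ⟨a, mem_inter.mpr ⟨haU, haV⟩⟩
    (Finset.ssubset_iff_subset_ne.mpr ⟨inter_subset_left, fun h => hUV (inter_eq_left.mp h)⟩)
    (Finset.ssubset_iff_subset_ne.mpr ⟨inter_subset_right, fun h => hVU (inter_eq_right.mp h)⟩)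

lemma mul_pow_univ_eq_zero_of_forall_ne_univ {d : ℕ} {s t : Fin n}
    (hst : (∑ V ∈ univ.filter (fun V : Finset (Fin n) => s ∈ V ∧ t ∈ V), δ V) ^ d = 0)
    {x : R} {e : ℕ} (hde : d ≤ e)
    (hx : ∀ V : Finset (Fin n), s ∈ V → t ∈ V → V ≠ univ → x * δ V * δ univ ^ (e - d) = 0) :
    x * δ univ ^ e = 0 := by
  have huniv : univ ∈ univ.filter (fun V : Finset (Fin n) => s ∈ V ∧ t ∈ V) := by simp
  rw [← add_sum_erase _ δ huniv] at hst
  rw [← Nat.sub_add_cancel hde, pow_add, ← mul_assoc]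
  refine mul_pow_eq_zero_of_mul_eq_zero_of_add_pow_eq_zero ?_ hst
  rw [mul_sum]
  refine sum_eq_zero fun V hV => ?_
  simp only [mem_erase, mem_filter, mem_univ, true_and] at hV
  rw [mul_right_comm]
  exact hx V hV.2.1 hV.2.2 hV.1

lemma mul_pow_univ_eq_zero {d : ℕ}
    (hrel1 : ∀ S T : Finset (Fin n), 2 ≤ S.card → 2 ≤ T.card →
      (S ∩ T).Nonempty → S ∩ T ⊂ S → S ∩ T ⊂ T → δ S * δ T = 0)
    (hrel2 : ∀ a b : Fin n, a ≠ b →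
      (∑ S ∈ Finset.univ.filter (fun S : Finset (Fin n) => a ∈ S ∧ b ∈ S), δ S) ^ d = 0)
    {U : Finset (Fin n)} (hU : 2 ≤ #U) (hUN : U ≠ univ) {m : ℕ} (hm : d * (n - #U) ≤ m) :
    δ U * δ univ ^ m = 0 := by
  revert hU hUN m
  refine strongDownwardInduction (n := n)
    (p := fun U => 2 ≤ #U → U ≠ univ → ∀ {m}, d * (n - #U) ≤ m → δ U * δ univ ^ m = 0)
    (fun U ih _ hU hUN m hm => ?_) U (by simpa using card_le_univ U)
  obtain ⟨s, -, hsU⟩ := exists_of_ssubset (Finset.ssubset_univ_iff.mpr hUN)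
  obtain ⟨t, htU⟩ := card_pos.mp (by omega : 0 < #U)
  have hst : s ≠ t := fun h => hsU (h ▸ htU)
  have hUn : #U < n := by simpa using card_lt_univ_of_notMem hsU
  have hdm : d * (n - #U - 1) + d ≤ m := by rwa [← Nat.mul_add_one, Nat.sub_add_cancel (by omega)]
  refine mul_pow_univ_eq_zero_of_forall_ne_univ (hrel2 s t hst) (by omega)
    fun V hsV htV hVN => ?_
  have hV : 2 ≤ #V := one_lt_card.mpr ⟨s, hsV, t, htV, hst⟩
  by_cases hUV : U ⊆ V
  · have hUV' : U ⊂ V := ssubset_of_subset_of_ne hUV fun h => hsU (h ▸ hsV)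
    have hle : d * (n - #V) ≤ d * (n - #U - 1) :=
      Nat.mul_le_mul_left d (by have := card_lt_card hUV'; omega)
    rw [mul_assoc, ih (by simpa using card_le_univ V) hUV' hV hVN (by omega), mul_zero]
  · rw [mul_eq_zero_of_not_nested hrel1 hU hV htU htV hUV fun h => hsU (h hsV), zero_mul]

end ChowRing

theorem disjoint_vanishing_general (d n : ℕ)
    {R : Type*} [CommRing R] (δ : Finset (Fin n) → R)
    (hrel1 : ∀ S T : Finset (Fin n), 2 ≤ S.card → 2 ≤ T.card →
      (S ∩ T).Nonempty → S ∩ T ⊂ S → S ∩ T ⊂ T → δ S * δ T = 0)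
    (hrel2 : ∀ a b : Fin n, a ≠ b →
      (∑ S ∈ Finset.univ.filter (fun S : Finset (Fin n) => a ∈ S ∧ b ∈ S), δ S) ^ d = 0) :
    ∀ S T : Finset (Fin n), 2 ≤ S.card → 2 ≤ T.card → Disjoint S T → T ⊂ Finset.univ →
      δ S * δ T * δ Finset.univ ^ (d * (n - T.card) - 1) = 0 := by
  intro S T hS hT hST hTN
  obtain ⟨s, hsS⟩ := card_pos.mp (by omega : 0 < #S)
  obtain ⟨t, htT⟩ := card_pos.mp (by omega : 0 < #T)
  have hsT : s ∉ T := disjoint_left.mp hST hsS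
  have htS : t ∉ S := disjoint_right.mp hST htT
  have hcard : #S + #T ≤ n := by simpa [card_union_of_disjoint hST] using card_le_univ (S ∪ T)
  have hde : d * 2 ≤ d * (n - #T) := Nat.mul_le_mul_left d (by omega)
  refine mul_pow_univ_eq_zero_of_forall_ne_univ (hrel2 s t fun h => hsT (h ▸ htT)) (by omega)
    fun V hsV htV hVN => ?_
  have hV : 2 ≤ #V := one_lt_card.mpr ⟨s, hsV, t, htV, fun h => hsT (h ▸ htT)⟩
  by_cases hSV : S ⊆ V
  · by_cases hTV : T ⊆ V
    · have hSTV : #S + #T ≤ #V := by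
        simpa [card_union_of_disjoint hST] using card_le_card (union_subset hSV hTV)
      have hle := mul_le_mul_sub_one_sub_of_add_two_le (d := d) (by omega : n - #V + 2 ≤ n - #T)
      rw [mul_assoc, mul_pow_univ_eq_zero hrel1 hrel2 hV hVN hle, mul_zero]
    · rw [mul_assoc (δ S), mul_eq_zero_of_not_nested hrel1 hT hV htT htV hTV fun h => hsT (h hsV),
        mul_zero, zero_mul]
  · rw [mul_right_comm (δ S),
      mul_eq_zero_of_not_nested hrel1 hS hV hsS hsV hSV fun h => htS (h htV), zero_mul, zero_mul]

/-- In the Chow ring `A_{d,n}` of `T_{d,n}`: if `S, T ⊆ N` with `|S|, |T| ≥ 2` are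
disjoint and `T ⊊ N`, then `δ_S · δ_T · δ_N^{d(n-|T|)-1} = 0`. -/
theorem disjoint_vanishing (d n : ℕ) (hd : 1 ≤ d) (hn : 2 ≤ n)
    {R : Type*} [CommRing R] (δ : Finset (Fin n) → R)
    (hrel1 : ∀ S T : Finset (Fin n), 2 ≤ S.card → 2 ≤ T.card →
      (S ∩ T).Nonempty → S ∩ T ⊂ S → S ∩ T ⊂ T → δ S * δ T = 0)
    (hrel2 : ∀ a b : Fin n, a ≠ b →
      (∑ S ∈ Finset.univ.filter (fun S : Finset (Fin n) => a ∈ S ∧ b ∈ S), δ S) ^ d = 0) :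
    ∀ S T : Finset (Fin n), 2 ≤ S.card → 2 ≤ T.card → Disjoint S T → T ⊂ Finset.univ →
      δ S * δ T * δ Finset.univ ^ (d * (n - T.card) - 1) = 0 :=
  disjoint_vanishing_general d n δ hrel1 hrel2
end

section
/- Assume the degree identity deg(δ_N^{d(n-1)-1}) = (-1)^{d(n-1)-1} in the Chow ring A_{d,n} of T_{d,n}, and the pullback identity π*(δ_{N,n}) = δ_{N,n+1} + δ_{N⁺,n+1} for the point-dropping map π : T_{d,n+1} → T_{d,n}, together with π_*(δ_{N,n+1}^d) = [T_{d,n}] and δ_{N⁺,n+1}^d · δ_{N,n+1} = 0 and π_*(δ_{N,n+1}^i) = 0 for i < d. Then ∫ δ_{N⁺,n+1}^{dn-1} = (-1)^d ∫ δ_{N,n}^{d(n-1)-1}. -/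
/-!
Write `δ_{N⁺} = π^*δ_N - δ_N` on `T_{d,n+1}`. Since `δ_{N⁺}^d · δ_N = 0`, multiplying by `δ_{N⁺}^d`
kills every term of `(π^*δ_N - δ_N)^{d(n-1)-1}` except `π^*δ_N^{d(n-1)-1}`, so by the projection
formula `π_*δ_{N⁺}^{dn-1} = δ_N^{d(n-1)-1} · π_*δ_{N⁺}^d`. Expanding `δ_{N⁺}^d` binomially, only
`(-δ_N)^d` survives the pushforward, giving `π_*δ_{N⁺}^d = (-1)^d`.
-/

theorem mul_sub_pow_of_mul_eq_zero {R : Type*} [CommRing R] {y a : R} (h : y * a = 0)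
    (b : R) (m : ℕ) : y * (b - a) ^ m = y * b ^ m := by
  obtain ⟨c, hc⟩ := sub_dvd_pow_sub_pow b (b - a) m
  rw [sub_sub_cancel] at hc
  calc y * (b - a) ^ m = y * b ^ m - y * a * c := by rw [mul_assoc, ← hc]; ring
    _ = y * b ^ m := by rw [h, zero_mul, sub_zero]

section ProjectionFormula

variable {A B : Type*} [CommRing A] [CommRing B] (pb : B →+* A) (pf : A →+ B)

theorem map_add_pullback_pow (proj_formula : ∀ (b : B) (a : A), pf (pb b * a) = b * pf a)
    {a : A} {d : ℕ} (hlow : ∀ i < d, pf (a ^ i) = 0) (b : B) :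
    pf ((a + pb b) ^ d) = pf (a ^ d) := by
  rw [add_pow, map_sum, Finset.sum_range_succ, Nat.sub_self, pow_zero, mul_one,
    Nat.choose_self, Nat.cast_one, mul_one, add_eq_right]
  refine Finset.sum_eq_zero fun i hi => ?_
  have hterm : a ^ i * pb b ^ (d - i) * (d.choose i : A) = pb (b ^ (d - i) * d.choose i) * a ^ i := by
    simp only [map_mul, map_pow, map_natCast]; ring
  rw [hterm, proj_formula, hlow i (Finset.mem_range.mp hi), mul_zero]

theorem map_pullback_sub_pow (proj_formula : ∀ (b : B) (a : A), pf (pb b * a) = b * pf a)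
    {a : A} {d : ℕ} (hlow : ∀ i < d, pf (a ^ i) = 0) (b : B) :
    pf ((pb b - a) ^ d) = (-1) ^ d * pf (a ^ d) := by
  have hneg : ∀ i, (-a) ^ i = pb ((-1) ^ i) * a ^ i := fun i => by
    rw [neg_pow, map_pow, map_neg, map_one]
  rw [sub_eq_neg_add, map_add_pullback_pow pb pf proj_formula _ b, hneg, proj_formula]
  intro i hi
  rw [hneg, proj_formula, hlow i hi, mul_zero]

end ProjectionFormula

theorem induction_step_general (d n : ℕ) (hn : 2 ≤ n)
    {A B : Type*} [CommRing A] [CommRing B]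
    (pb : B →+* A) (pf : A →+ B)
    (proj_formula : ∀ (b : B) (a : A), pf (pb b * a) = b * pf a)
    (degA : A →+ ℤ) (degB : B →+ ℤ)
    (hcompat : ∀ a : A, degA a = degB (pf a))
    (δA δAp : A) (δNn : B)
    -- `δA = δ_{N,n+1}`, `δAp = δ_{N⁺,n+1}`, `δNn = δ_{N,n}`
    (hpull : pb δNn = δA + δAp)
    (hpf_top : pf (δA ^ d) = 1)
    (hpf_low : ∀ i < d, pf (δA ^ i) = 0)
    (hvanish : δAp ^ d * δA = 0) :
    degA (δAp ^ (d * n - 1)) = (-1 : ℤ) ^ d * degB (δNn ^ (d * (n - 1) - 1)) := by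
  set m := d * (n - 1) - 1
  have hsplit : d * n - 1 = d + m := by
    have hdn : d * n = d * (n - 1) + d := by rw [← Nat.mul_succ]; congr 1; omega
    have hd : d ≤ d * (n - 1) := Nat.le_mul_of_pos_right d (by omega)
    omega
  have hsub : δAp = pb δNn - δA := eq_sub_of_add_eq' hpull.symm
  calc degA (δAp ^ (d * n - 1)) = degB (pf (δAp ^ d * (pb δNn - δA) ^ m)) := by
        rw [hcompat, hsplit, pow_add, ← hsub]
    _ = degB (δNn ^ m * pf ((pb δNn - δA) ^ d)) := by
        rw [mul_sub_pow_of_mul_eq_zero hvanish, ← map_pow, mul_comm, proj_formula, hsub]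
    _ = (-1 : ℤ) ^ d * degB (δNn ^ m) := by
        rw [map_pullback_sub_pow pb pf proj_formula hpf_low, hpf_top, mul_one, mul_comm,
          show ((-1 : B)) ^ d = (((-1 : ℤ) ^ d : ℤ) : B) by push_cast; rfl, ← zsmul_eq_mul,
          map_zsmul, smul_eq_mul]

/-- The induction step for the top self-intersection of `δ_N` (Lemma `induction_step`):
Let `A` be the Chow ring of `T_{d,n+1}`, `B` that of `T_{d,n}`, `pb = π^*` the pullback
along the point-dropping map `π : T_{d,n+1} → T_{d,n}` and `pf = π_*` the pushforward,
satisfying the projection formula, with degree maps compatible with pushforward.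
Assume `deg_B(δ_{N,n}^{d(n-1)-1}) = (-1)^{d(n-1)-1}`, the pullback identity
`π^*(δ_{N,n}) = δ_{N,n+1} + δ_{N⁺,n+1}`, `π_*(δ_{N,n+1}^d) = 1`,
`π_*(δ_{N,n+1}^i) = 0` for `i < d`, and `δ_{N⁺,n+1}^d · δ_{N,n+1} = 0`.
Then `∫ δ_{N⁺,n+1}^{dn-1} = (-1)^d ∫ δ_{N,n}^{d(n-1)-1}`. -/
theorem induction_step (d n : ℕ) (hd : 1 ≤ d) (hn : 2 ≤ n)
    {A B : Type*} [CommRing A] [CommRing B]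
    (pb : B →+* A) (pf : A →+ B)
    (proj_formula : ∀ (b : B) (a : A), pf (pb b * a) = b * pf a)
    (degA : A →+ ℤ) (degB : B →+ ℤ)
    (hcompat : ∀ a : A, degA a = degB (pf a))
    (δB δA δAp : A) (δNn : B)
    -- `δA = δ_{N,n+1}`, `δAp = δ_{N⁺,n+1}`, `δNn = δ_{N,n}`
    (hδB : δB = pb δNn)
    (hpull : pb δNn = δA + δAp)
    (hpf_top : pf (δA ^ d) = 1)
    (hpf_low : ∀ i < d, pf (δA ^ i) = 0)
    (hvanish : δAp ^ d * δA = 0)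
    (hdegB : degB (δNn ^ (d * (n - 1) - 1)) = (-1 : ℤ) ^ (d * (n - 1) - 1)) :
    degA (δAp ^ (d * n - 1)) = (-1 : ℤ) ^ d * degB (δNn ^ (d * (n - 1) - 1)) :=
  induction_step_general d n hn pb pf proj_formula degA degB hcompat δA δAp δNn hpull hpf_top
    hpf_low hvanish
end

section
/- For d > 1, the classes C_T = δ_T^{d(|T|-1)-1}·δ_N^{d(n-|T|)-1}, indexed by subsets T ⊆ N with 2 ≤ |T|, pair with the divisor classes δ_S via an integer matrix which is, up to a global sign (-1)^{d(n-1)}, the identity matrix; in particular this pairing matrix is invertible over Z. -/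
/-!
Every identity below comes from multiplying a relation `(∑_{S ∋ a, b} δ_S)^d = 0` by a monomial
and expanding it as a sum over the maps `f : Fin d → {S ∋ a, b}`. The overlap relations, together
with the vanishing of `δ_B` against every monomial of degree `≥ d(n - |B|)` in the classes `δ_W`,
`W ⊋ B` (itself proved this way, by downward induction on `|B|`), kill all but one or two terms.

For `S ≠ T` this gives `δ_S · C_T = 0` directly. For `S = T` it gives, for `B ⊊ T` and
`b ∈ T \ B`, a sign-reversing rule that inserts `B ∪ {b}` into the chain `B ⊂ T ⊂ N`, or drops `T`
when `T = B ∪ {b}`. Starting from a point `B = {a}`, this evaluates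
`δ_T · C_T = δ_T^{d(|T|-1)} δ_N^{d(n-|T|)-1}` to `-δ_N^{d(n-1)-1}`, whose degree is `(-1)^{d(n-1)}`.
-/

open Finset

theorem Nat.mul_sub_add_le_mul_sub {d n x y : ℕ} (hxy : x < y) (hyn : y ≤ n) :
    d * (n - y) + d ≤ d * (n - x) := by
  rw [← mul_add_one]
  exact Nat.mul_le_mul_left d (by omega)

theorem Multiset.prod_map_eq_zero_of_le {ι M : Type*} [CommMonoidWithZero M] {f : ι → M}
    {s t : Multiset ι} (hst : s ≤ t) (hs : (s.map f).prod = 0) : (t.map f).prod = 0 :=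
  zero_dvd_iff.mp (hs ▸ Multiset.prod_dvd_prod_of_le (Multiset.map_le_map hst))

theorem Multiset.apply_mem_add_map_univ {ι β : Type*} [Fintype ι] (m : Multiset β) (f : ι → β)
    (i : ι) : f i ∈ m + univ.val.map f :=
  Multiset.mem_add.mpr (Or.inr (Multiset.mem_map_of_mem f (mem_univ_val i)))

theorem filter_ssubset_map_ne_zero {ι β : Type*} [Fintype ι] [DecidableEq β]
    {f : ι → Finset β} {i₀ : ι} (hmin : ∀ i, f i₀ ⊆ f i) (hf : f ≠ fun _ => f i₀) :
    (univ.val.map f).filter (f i₀ ⊂ ·) ≠ 0 := by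
  obtain ⟨i, hi⟩ : ∃ i, f i ≠ f i₀ := by
    by_contra! hc
    exact hf (funext hc)
  intro h0
  exact Multiset.notMem_zero (f i) (h0 ▸ Multiset.mem_filter.mpr
    ⟨Multiset.mem_map_of_mem f (mem_univ_val i), (hmin i).ssubset_of_ne hi.symm⟩)

section

variable {α : Type*} [Fintype α] {R : Type*} [CommRing R]

def AnnihilatesAbove (d : ℕ) (δ : Finset α → R) (B : Finset α) : Prop :=
  ∀ m : Multiset (Finset α), (∀ W ∈ m, B ⊂ W) → d * (Fintype.card α - #B) ≤ Multiset.card m →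
    δ B * (m.map δ).prod = 0

/-- The one-cycle `C_T`. -/
def curveClass (d : ℕ) (δ : Finset α → R) (T : Finset α) : R :=
  δ T ^ (d * (#T - 1) - 1) * δ univ ^ (d * (Fintype.card α - #T) - 1)

variable {d : ℕ} {δ : Finset α → R}

theorem curveClass_eq_mul (hd : 1 < d) {T : Finset α} (hT2 : 2 ≤ #T) :
    curveClass d δ T =
      δ T * (δ T ^ (d * (#T - 1) - 2) * δ univ ^ (d * (Fintype.card α - #T) - 1)) := by
  have := Nat.mul_le_mul hd (show 1 ≤ #T - 1 by omega)
  rw [curveClass, ← mul_assoc, ← pow_succ']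
  congr 3
  omega

theorem AnnihilatesAbove.prod_eq_zero {B : Finset α} (hB : AnnihilatesAbove d δ B)
    {m s : Multiset (Finset α)} (hBm : B ∈ m) (hsm : s ≤ m) (hBs : ∀ X ∈ s, B ⊂ X)
    (hcard : d * (Fintype.card α - #B) ≤ Multiset.card s) : (m.map δ).prod = 0 := by
  refine Multiset.prod_map_eq_zero_of_le (s := B ::ₘ s) ?_ ?_
  · exact (Multiset.cons_le_of_notMem fun hB => (hBs B hB).ne rfl).mpr ⟨hBm, hsm⟩
  · rw [Multiset.map_cons, Multiset.prod_cons]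
    exact hB s hBs hcard

/-- With `d (n - |X|) - 1` classes strictly above `U ⊇ X`, one more is needed when `U = X`; when
`U ⊋ X` the budget `d (n - |U|)` is already smaller by `d`. -/
theorem AnnihilatesAbove.prod_eq_zero_of_critical {U X : Finset α} (hU : AnnihilatesAbove d δ U)
    (hd : d ≠ 0) {m s t : Multiset (Finset α)} (hUm : U ∈ m) (hstm : s + t ≤ m)
    (hUs : ∀ Y ∈ s, U ⊂ Y) (hUt : ∀ Y ∈ t, U ⊂ Y) (hXU : X ⊆ U)
    (hcard : d * (Fintype.card α - #X) ≤ Multiset.card s + 1) (ht : U = X → t ≠ 0) :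
    (m.map δ).prod = 0 := by
  refine hU.prod_eq_zero hUm hstm
    (fun Y hY => (Multiset.mem_add.mp hY).elim (hUs Y) (hUt Y)) ?_
  rw [Multiset.card_add]
  rcases eq_or_ne U X with rfl | hUX
  · have := Multiset.card_pos.mpr (ht rfl)
    omega
  · have := Nat.mul_sub_add_le_mul_sub (d := d)
      (card_lt_card (hXU.ssubset_of_ne (Ne.symm hUX))) (card_le_univ U)
    omega

variable [DecidableEq α]

theorem sum_map_card_compl_add_lt (m : Multiset (Finset α)) {V : Finset α}
    {f : Fin d → Finset α} (hVf : ∀ i, V ⊆ f i) (hf : f ≠ fun _ => V) :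
    ((m + univ.val.map f).map fun W => #Wᶜ).sum <
      ((Multiset.replicate d V + m).map fun W => #Wᶜ).sum := by
  obtain ⟨i, hi⟩ : ∃ i, f i ≠ V := by
    by_contra! hc
    exact hf (funext hc)
  have : ∑ i, #(f i)ᶜ < ∑ _i : Fin d, #Vᶜ :=
    sum_lt_sum (fun i _ => card_le_card (compl_subset_compl.mpr (hVf i)))
      ⟨i, mem_univ _, card_lt_card (compl_ssubset_compl.mpr ((hVf i).ssubset_of_ne hi.symm))⟩
  simp only [Multiset.map_add, Multiset.sum_add, Multiset.map_map, Multiset.map_replicate,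
    Multiset.sum_replicate, smul_eq_mul]
  rw [← sum_eq_multiset_sum]
  simp only [Function.comp_apply, sum_const, card_univ, Fintype.card_fin, smul_eq_mul] at this ⊢
  omega

/-- The relations generating `I_{d,n}`, for classes `δ_S` indexed by the subsets of `α`. -/
structure TdnRelations (d : ℕ) (δ : Finset α → R) : Prop where
  mul_eq_zero_of_overlap : ∀ S T : Finset α, 2 ≤ S.card → 2 ≤ T.card →
    (S ∩ T).Nonempty → S ∩ T ⊂ S → S ∩ T ⊂ T → δ S * δ T = 0
  sum_pow_eq_zero : ∀ a b : α, a ≠ b →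
    (∑ S ∈ Finset.univ.filter (fun S : Finset α => a ∈ S ∧ b ∈ S), δ S) ^ d = 0

namespace TdnRelations

theorem subset_or_subset_of_prod_ne_zero (h : TdnRelations d δ) {m : Multiset (Finset α)}
    (hm : (m.map δ).prod ≠ 0) {S T : Finset α} (hS : S ∈ m) (hT : T ∈ m) (hS2 : 2 ≤ #S)
    (hT2 : 2 ≤ #T) (hST : (S ∩ T).Nonempty) : S ⊆ T ∨ T ⊆ S := by
  by_contra! hcomp
  obtain ⟨hST', hTS⟩ := hcomp
  have hne : S ≠ T := by
    rintro rfl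
    exact hST' subset_rfl
  refine hm (Multiset.prod_map_eq_zero_of_le (s := {S, T}) ?_ ?_)
  · exact (Multiset.cons_le_of_notMem (by simpa using hne)).mpr ⟨hS, Multiset.singleton_le.mpr hT⟩
  · simpa using h.mul_eq_zero_of_overlap S T hS2 hT2 hST
      (inter_subset_left.ssubset_of_ne (mt inter_eq_left.mp hST'))
      (inter_subset_right.ssubset_of_ne (mt inter_eq_right.mp hTS))

theorem subset_of_prod_ne_zero (h : TdnRelations d δ) {m : Multiset (Finset α)}
    (hm : (m.map δ).prod ≠ 0) {S X : Finset α} (hS : S ∈ m) (hX : X ∈ m) (hS2 : 2 ≤ #S)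
    {a b : α} (haS : a ∈ S) (haX : a ∈ X) (hbX : b ∈ X) (hbS : b ∉ S) : S ⊆ X :=
  (h.subset_or_subset_of_prod_ne_zero hm hS hX hS2
    (one_lt_card.mpr ⟨a, haX, b, hbX, by rintro rfl; exact hbS haS⟩)
    ⟨a, mem_inter.mpr ⟨haS, haX⟩⟩).resolve_right fun hXS => hbS (hXS hbX)

theorem exists_forall_subset_of_prod_ne_zero (h : TdnRelations d δ)
    {m s : Multiset (Finset α)} (hm : (m.map δ).prod ≠ 0) (hsm : s ≤ m) (hs : s ≠ 0) {a : α}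
    (ha : ∀ X ∈ s, a ∈ X) (hs2 : ∀ X ∈ s, 2 ≤ #X) : ∃ U ∈ s, ∀ X ∈ s, U ⊆ X := by
  obtain ⟨U, hU, hUmin⟩ := s.toFinset.exists_min_image card (Multiset.toFinset_nonempty.mpr hs)
  rw [Multiset.mem_toFinset] at hU
  refine ⟨U, hU, fun X hX => ?_⟩
  obtain hUX | hXU := h.subset_or_subset_of_prod_ne_zero hm (Multiset.mem_of_le hsm hU)
    (Multiset.mem_of_le hsm hX) (hs2 U hU) (hs2 X hX) ⟨a, mem_inter.mpr ⟨ha U hU, ha X hX⟩⟩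
  · exact hUX
  · rw [eq_of_subset_of_card_le hXU (hUmin X (Multiset.mem_toFinset.mpr hX))]

theorem exists_forall_subset_apply_of_prod_ne_zero (h : TdnRelations d δ) (hd : d ≠ 0)
    {m : Multiset (Finset α)} {f : Fin d → Finset α} {a b : α} (hab : a ≠ b)
    (hf : ∀ i, a ∈ f i ∧ b ∈ f i) (hm : ((m + univ.val.map f).map δ).prod ≠ 0) :
    ∃ i₀, ∀ i, f i₀ ⊆ f i := by
  obtain ⟨U, hU, hUmin⟩ := h.exists_forall_subset_of_prod_ne_zero hm (Multiset.le_add_left _ _)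
    (Multiset.card_pos.mp (by simp [Nat.pos_of_ne_zero hd])) (a := a) (by simp [hf])
    fun X hX => by
      obtain ⟨i, -, rfl⟩ := Multiset.mem_map.mp hX
      exact one_lt_card.mpr ⟨a, (hf i).1, b, (hf i).2, hab⟩
  obtain ⟨i₀, -, rfl⟩ := Multiset.mem_map.mp hU
  exact ⟨i₀, fun i => hUmin _ (Multiset.mem_map_of_mem f (mem_univ_val i))⟩

theorem sum_prod_add_replicate_eq_zero (h : TdnRelations d δ) (hd : d ≠ 0) {a b : α}
    (hab : a ≠ b) (m : Multiset (Finset α)) (F : Finset (Finset α))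
    (hF : ∀ V ∈ F, a ∈ V ∧ b ∈ V)
    (hkill : ∀ f : Fin d → Finset α, (∀ i, a ∈ f i ∧ b ∈ f i) → (∀ V ∈ F, f ≠ fun _ => V) →
      ((m + univ.val.map f).map δ).prod = 0) :
    ∑ V ∈ F, ((m + Multiset.replicate d V).map δ).prod = 0 := by
  set live := univ.filter fun S : Finset α => a ∈ S ∧ b ∈ S
  have hexpand : ∑ f ∈ Fintype.piFinset fun _ : Fin d => live,
      ((m + univ.val.map f).map δ).prod = 0 := by
    have := congrArg ((m.map δ).prod * ·) (h.sum_pow_eq_zero a b hab)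
    simp only [mul_zero] at this
    rw [← this, ← Fin.prod_const, prod_univ_sum, mul_sum]
    refine sum_congr rfl fun f _ => ?_
    rw [Multiset.map_add, Multiset.prod_add, prod_eq_multiset_prod, Multiset.map_map]
    rfl
  rw [← hexpand, ← sum_subset (s₁ := F.image fun V (_ : Fin d) => V), sum_image]
  · simp [Multiset.map_const']
  · intro V _ W _ hVW
    exact congrFun hVW ⟨0, Nat.pos_of_ne_zero hd⟩
  · intro f hf
    obtain ⟨V, hV, rfl⟩ := mem_image.mp hf
    simp [Fintype.mem_piFinset, live, hF V hV]
  · intro f hf hfF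
    exact hkill f (by simpa [live] using Fintype.mem_piFinset.mp hf)
      fun V hV hfV => hfF (mem_image.mpr ⟨V, hV, hfV.symm⟩)

/-- With `a ∈ B` and `b ∈ V \ B`, trading `δ_V^d` for the other terms of `(∑_{S ∋ a, b} δ_S)^d`
either lowers the total codimension or produces a class `δ_U`, `B ⊂ U ⊉ V`, below all of `m`. -/
theorem mul_prod_replicate_add_eq_zero (h : TdnRelations d δ) (hd : d ≠ 0) {B V : Finset α}
    (hB2 : 2 ≤ #B) (hBV : B ⊂ V) {m : Multiset (Finset α)} (hVm : ∀ X ∈ m, V ⊆ X)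
    (hcard : d * (Fintype.card α - #B) ≤ d + Multiset.card m)
    (ih : ∀ W, B ⊂ W → W ≠ univ → AnnihilatesAbove d δ W)
    (ihΦ : ∀ m' : Multiset (Finset α),
      (m'.map fun W => #Wᶜ).sum < ((Multiset.replicate d V + m).map fun W => #Wᶜ).sum →
      (∀ X ∈ m', B ⊂ X) → d * (Fintype.card α - #B) ≤ Multiset.card m' →
      δ B * (m'.map δ).prod = 0) :
    δ B * ((Multiset.replicate d V + m).map δ).prod = 0 := by
  obtain ⟨a, haB⟩ := card_pos.mp (by omega : 0 < #B)
  obtain ⟨b, hbV, hbB⟩ := exists_of_ssubset hBV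
  have hab : a ≠ b := by
    rintro rfl
    exact hbB haB
  have key := h.sum_prod_add_replicate_eq_zero hd hab (B ::ₘ m) {V}
    (by simpa using ⟨hBV.subset haB, hbV⟩) ?_
  · simpa [add_comm] using key
  intro f hf hfV
  simp only [mem_singleton, forall_eq] at hfV
  have hfm := Multiset.apply_mem_add_map_univ (B ::ₘ m) f
  by_contra hne
  have hBf : ∀ i, B ⊂ f i := fun i =>
    (h.subset_of_prod_ne_zero hne (by simp) (hfm i) hB2 haB (hf i).1 (hf i).2 hbB).ssubset_of_ne
      (by rintro rfl; exact hbB (hf i).2)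
  obtain ⟨i₀, hmin⟩ := h.exists_forall_subset_apply_of_prod_ne_zero hd hab hf hne
  by_cases hVU : V ⊆ f i₀
  · refine hne ?_
    rw [Multiset.cons_add, Multiset.map_cons, Multiset.prod_cons]
    refine ihΦ _ (sum_map_card_compl_add_lt m (fun i => hVU.trans (hmin i)) hfV) ?_ (by
      simp only [Multiset.card_add, Multiset.card_map, card_val, card_univ, Fintype.card_fin]
      omega)
    intro X hX
    rcases Multiset.mem_add.mp hX with hX | hX
    · exact hBV.trans_subset (hVm X hX)
    · obtain ⟨i, -, rfl⟩ := Multiset.mem_map.mp hX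
      exact hBf i
  · have hUN : f i₀ ≠ univ := fun hU => hVU (hU ▸ subset_univ V)
    have hUm : ∀ X ∈ m, f i₀ ⊂ X := fun X hX =>
      ((h.subset_or_subset_of_prod_ne_zero hne (hfm i₀) (by simp [hX])
        (hB2.trans (card_le_card (hBf i₀).subset))
        (hB2.trans (card_le_card (hBV.subset.trans (hVm X hX))))
        ⟨a, mem_inter.mpr ⟨(hf i₀).1, hBV.subset.trans (hVm X hX) haB⟩⟩).resolve_right
        fun hXU => hVU ((hVm X hX).trans hXU)).ssubset_of_ne
        (by rintro rfl; exact hVU (hVm _ hX))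
    refine hne ((ih (f i₀) (hBf i₀) hUN).prod_eq_zero (hfm i₀) (s := m)
      ((Multiset.le_cons_self m B).trans (Multiset.le_add_right _ _)) hUm ?_)
    have := Nat.mul_sub_add_le_mul_sub (d := d) (card_lt_card (hBf i₀)) (card_le_univ (f i₀))
    omega

theorem annihilatesAbove_of_forall_ssubset (h : TdnRelations d δ) (hd : d ≠ 0)
    {B : Finset α} (hB2 : 2 ≤ #B) (hBN : B ≠ univ)
    (ih : ∀ W, B ⊂ W → W ≠ univ → AnnihilatesAbove d δ W) : AnnihilatesAbove d δ B := by
  intro m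
  induction hΦ : (m.map fun W => #Wᶜ).sum using Nat.strong_induction_on generalizing m with
  | _ k ihΦ =>
  intro hm hcard
  have hBn : #B < Fintype.card α := (card_lt_iff_ne_univ B).mpr hBN
  have hdm : d ≤ Multiset.card m := le_trans (Nat.le_mul_of_pos_right d (by omega)) hcard
  obtain ⟨a, haB⟩ := card_pos.mp (by omega : 0 < #B)
  by_contra hne
  obtain ⟨V, hVm, hVmin⟩ := h.exists_forall_subset_of_prod_ne_zero (m := B ::ₘ m)
    (by simpa using hne) (Multiset.le_cons_self _ _) (Multiset.card_pos.mp (by omega))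
    (fun X hX => (hm X hX).subset haB) (fun X hX => hB2.trans (card_le_card (hm X hX).subset))
  by_cases hμ : d ≤ m.count V
  · obtain ⟨m₁, rfl⟩ := Multiset.le_iff_exists_add.mp (Multiset.le_count_iff_replicate_le.mp hμ)
    exact hne (h.mul_prod_replicate_add_eq_zero hd hB2 (hm V hVm)
      (fun X hX => hVmin X (Multiset.mem_add.mpr (Or.inr hX))) (by simpa using hcard) ih
      fun m' hm' => ihΦ _ (hΦ ▸ hm') m' rfl)
  · have hVN : V ≠ univ := by
      rintro rfl
      have := Multiset.count_eq_card.mpr fun X hX => (univ_subset_iff.mp (hVmin X hX)).symm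
      omega
    have hcount : Multiset.card m = m.count V + Multiset.card (m.filter (V ⊂ ·)) := by
      rw [Multiset.card_eq_countP_add_countP (V = ·) m, ← Multiset.countP_eq_card_filter]
      congr 1
      exact Multiset.countP_congr rfl fun X hX => by
        simp [ssubset_iff_subset_ne, hVmin X hX]
    refine hne ?_
    rw [(ih V (hm V hVm) hVN).prod_eq_zero hVm (s := m.filter (V ⊂ ·)) (Multiset.filter_le _ m)
      (fun X hX => (Multiset.mem_filter.mp hX).2) ?_, mul_zero]
    have := Nat.mul_sub_add_le_mul_sub (d := d) (card_lt_card (hm V hVm)) (card_le_univ V)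
    omega

theorem annihilatesAbove (h : TdnRelations d δ) (hd : d ≠ 0) {B : Finset α} (hB2 : 2 ≤ #B)
    (hBN : B ≠ univ) : AnnihilatesAbove d δ B :=
  h.annihilatesAbove_of_forall_ssubset hd hB2 hBN fun W hBW hWN =>
    h.annihilatesAbove hd (hB2.trans (card_le_card hBW.subset)) hWN
termination_by Fintype.card α - #B
decreasing_by
  have := card_lt_card hBW
  have := card_le_univ W
  omega

theorem mul_mul_pow_eq_zero_of_disjoint (h : TdnRelations d δ) (hd : d ≠ 0) {S T : Finset α}
    (hS2 : 2 ≤ #S) (hT2 : 2 ≤ #T) (hST : Disjoint S T) {k : ℕ}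
    (hk : d * (Fintype.card α - #S - #T) + d ≤ k) : δ S * δ T * δ univ ^ k = 0 := by
  obtain ⟨a, ha⟩ := card_pos.mp (by omega : 0 < #S)
  obtain ⟨b, hb⟩ := card_pos.mp (by omega : 0 < #T)
  have haT : a ∉ T := disjoint_left.mp hST ha
  have hbS : b ∉ S := disjoint_right.mp hST hb
  have hab : a ≠ b := by
    rintro rfl
    exact haT hb
  have key := h.sum_prod_add_replicate_eq_zero hd hab
    (S ::ₘ T ::ₘ Multiset.replicate (k - d) univ) {univ} (by simp) ?_
  · rw [sum_singleton, Multiset.cons_add, Multiset.cons_add, ← Multiset.replicate_add,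
      Nat.sub_add_cancel (by omega)] at key
    simpa [mul_assoc] using key
  intro f hf hfN
  simp only [mem_singleton, forall_eq] at hfN
  have hfm := Multiset.apply_mem_add_map_univ (S ::ₘ T ::ₘ Multiset.replicate (k - d) univ) f
  by_contra hne
  obtain ⟨i₀, hmin⟩ := h.exists_forall_subset_apply_of_prod_ne_zero hd hab hf hne
  have hSU := h.subset_of_prod_ne_zero hne (by simp) (hfm i₀) hS2 ha (hf i₀).1 (hf i₀).2 hbS
  have hTU := h.subset_of_prod_ne_zero hne (by simp) (hfm i₀) hT2 hb (hf i₀).2 (hf i₀).1 haT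
  have hUN : f i₀ ≠ univ := fun hU => hfN (funext fun i => univ_subset_iff.mp (hU ▸ hmin i))
  have hSTU : #S + #T ≤ #(f i₀) := by
    rw [← card_union_of_disjoint hST]
    exact card_le_card (union_subset hSU hTU)
  refine hne ((h.annihilatesAbove hd (hS2.trans (card_le_card hSU)) hUN).prod_eq_zero (hfm i₀)
    (s := Multiset.replicate (k - d) univ)
    (((Multiset.le_cons_self _ _).trans (Multiset.le_cons_self _ _)).trans
      (Multiset.le_add_right _ _))
    (fun X hX => Multiset.eq_of_mem_replicate hX ▸ ssubset_univ_iff.mpr hUN) ?_)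
  have := Nat.mul_le_mul_left d
    (show Fintype.card α - #(f i₀) ≤ Fintype.card α - #S - #T by omega)
  simp only [Multiset.card_replicate]
  omega

theorem prod_replicate_add_replicate_univ_eq_zero (h : TdnRelations d δ) (hd : d ≠ 0)
    {p : Multiset (Finset α)} {T : Finset α} (hT2 : 2 ≤ #T) (hTN : T ≠ univ) {q k : ℕ}
    (hq : q ≠ 0) (hk : d * (Fintype.card α - #T) ≤ k) :
    ((p + Multiset.replicate q T + Multiset.replicate k univ).map δ).prod = 0 :=
  (h.annihilatesAbove hd hT2 hTN).prod_eq_zero (by simp [Multiset.mem_replicate, hq])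
    (Multiset.le_add_left _ _)
    (fun X hX => Multiset.eq_of_mem_replicate hX ▸ ssubset_univ_iff.mpr hTN) (by simpa using hk)

theorem prod_add_map_eq_zero_of_least (h : TdnRelations d δ) (hd : d ≠ 0)
    {p : Multiset (Finset α)} {V T : Finset α} (hVT : V ⊆ T) (hTN : T ≠ univ)
    {f : Fin d → Finset α} {i₀ : Fin d} (hmin : ∀ i, f i₀ ⊆ f i) (hVU : V ⊆ f i₀)
    (hU2 : 2 ≤ #(f i₀)) (hUN : f i₀ ≠ univ) (hUT : f i₀ ⊆ T ∨ T ⊆ f i₀)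
    (hfT : f ≠ fun _ => T) (hfV : f ≠ fun _ => V) :
    ((p + Multiset.replicate (d * (#T - #V)) T +
      Multiset.replicate (d * (Fintype.card α - #T) - 1) univ + univ.val.map f).map δ).prod =
      0 := by
  have hTn : #T < Fintype.card α := (card_lt_iff_ne_univ T).mpr hTN
  have hVT' := card_le_card hVT
  have hr : d * (Fintype.card α - #T) - 1 + 1 = d * (Fintype.card α - #T) :=
    Nat.sub_add_cancel (Nat.mul_pos (Nat.pos_of_ne_zero hd) (by omega))
  have hqr : d * (#T - #V) + d * (Fintype.card α - #T) = d * (Fintype.card α - #V) := by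
    rw [← mul_add]
    congr 1
    omega
  have hAnn := h.annihilatesAbove hd hU2 hUN
  have hfm := Multiset.apply_mem_add_map_univ (p + Multiset.replicate (d * (#T - #V)) T +
    Multiset.replicate (d * (Fintype.card α - #T) - 1) univ) f
  have hL := filter_ssubset_map_ne_zero hmin
  by_cases hUT' : f i₀ ⊂ T
  · refine hAnn.prod_eq_zero_of_critical hd (hfm i₀)
      (s := Multiset.replicate (d * (#T - #V)) T +
        Multiset.replicate (d * (Fintype.card α - #T) - 1) univ)
      (add_le_add (by rw [add_assoc]; exact Multiset.le_add_left _ _) (Multiset.filter_le _ _))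
      ?_ (fun Y hY => (Multiset.mem_filter.mp hY).2) hVU
      (by simp only [Multiset.card_add, Multiset.card_replicate]; omega)
      fun hUV => hL (by rwa [hUV])
    intro Y hY
    simp only [Multiset.mem_add, Multiset.mem_replicate] at hY
    rcases hY with ⟨-, rfl⟩ | ⟨-, rfl⟩
    · exact hUT'
    · exact ssubset_univ_iff.mpr hUN
  · refine hAnn.prod_eq_zero_of_critical hd (hfm i₀)
      (s := Multiset.replicate (d * (Fintype.card α - #T) - 1) univ)
      (add_le_add (Multiset.le_add_left _ _) (Multiset.filter_le _ _))
      (fun Y hY => Multiset.eq_of_mem_replicate hY ▸ ssubset_univ_iff.mpr hUN)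
      (fun Y hY => (Multiset.mem_filter.mp hY).2)
      (hUT.elim (fun hUT'' => (eq_of_le_of_not_lt hUT'' hUT').ge) id)
      (by simp only [Multiset.card_replicate]; omega)
      fun hUT'' => hL (by rwa [hUT''])

theorem prod_add_map_eq_zero_of_ne_const (h : TdnRelations d δ) (hd : d ≠ 0)
    {p : Multiset (Finset α)} {a b : α} {B T : Finset α} (haB : a ∈ B) (hbB : b ∉ B)
    (hp : 2 ≤ #B → B ∈ p) (hBT : insert b B ⊆ T) (hTN : T ≠ univ) {f : Fin d → Finset α}
    (hf : ∀ i, a ∈ f i ∧ b ∈ f i) (hfT : f ≠ fun _ => T) (hfV : f ≠ fun _ => insert b B)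
    (hfN : f ≠ fun _ => univ) :
    ((p + Multiset.replicate (d * (#T - #(insert b B))) T +
      Multiset.replicate (d * (Fintype.card α - #T) - 1) univ + univ.val.map f).map δ).prod =
      0 := by
  have hab : a ≠ b := by
    rintro rfl
    exact hbB haB
  have hfm := Multiset.apply_mem_add_map_univ (p + Multiset.replicate (d * (#T - #(insert b B))) T +
    Multiset.replicate (d * (Fintype.card α - #T) - 1) univ) f
  by_contra hne
  obtain ⟨i₀, hmin⟩ := h.exists_forall_subset_apply_of_prod_ne_zero hd hab hf hne
  have hBU : B ⊆ f i₀ := by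
    rcases le_or_gt 2 #B with hB2 | hB1
    · exact h.subset_of_prod_ne_zero hne (by simp [hp hB2]) (hfm i₀) hB2 haB (hf i₀).1
        (hf i₀).2 hbB
    · intro x hx
      rw [card_le_one.mp (by omega) x hx a haB]
      exact (hf i₀).1
  have hU2 : 2 ≤ #(f i₀) := one_lt_card.mpr ⟨a, (hf i₀).1, b, (hf i₀).2, hab⟩
  have hUT : f i₀ ⊆ T ∨ T ⊆ f i₀ := by
    rcases eq_or_ne (insert b B) T with hVT | hVT
    · exact Or.inr (hVT ▸ insert_subset (hf i₀).2 hBU)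
    · have hVT' := card_lt_card (hBT.ssubset_of_ne hVT)
      have hVB : #(insert b B) = #B + 1 := card_insert_of_notMem hbB
      have hB0 : 0 < #B := card_pos.mpr ⟨a, haB⟩
      exact h.subset_or_subset_of_prod_ne_zero hne (hfm i₀) (by
          simp [Multiset.mem_replicate, Nat.mul_ne_zero hd (show #T - #(insert b B) ≠ 0 by omega)])
        hU2 (by omega) ⟨a, mem_inter.mpr ⟨(hf i₀).1, hBT (mem_insert_of_mem haB)⟩⟩
  exact hne (h.prod_add_map_eq_zero_of_least hd hBT hTN hmin (insert_subset (hf i₀).2 hBU) hU2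
    (fun hU => hfN (funext fun i => univ_subset_iff.mp (hU ▸ hmin i))) hUT hfT hfV)

theorem prod_mul_pow_mul_pow_eq_neg_of_insert_eq (h : TdnRelations d δ) (hd : d ≠ 0)
    {p : Multiset (Finset α)} {a b : α} {B T : Finset α} (haB : a ∈ B) (hbB : b ∉ B)
    (hp : 2 ≤ #B → B ∈ p) (hBT : insert b B = T) (hTN : T ≠ univ) :
    (p.map δ).prod * δ T ^ (d * (#T - #B)) * δ univ ^ (d * (Fintype.card α - #T) - 1) =
      -((p.map δ).prod * δ univ ^ (d * (Fintype.card α - #B) - 1)) := by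
  subst hBT
  have hab : a ≠ b := by
    rintro rfl
    exact hbB haB
  have hVB : #(insert b B) = #B + 1 := card_insert_of_notMem hbB
  have hTn := (card_lt_iff_ne_univ _).mpr hTN
  have key := h.sum_prod_add_replicate_eq_zero hd hab
    (p + Multiset.replicate (d * (#(insert b B) - #(insert b B))) (insert b B) +
      Multiset.replicate (d * (Fintype.card α - #(insert b B)) - 1) univ)
    {insert b B, univ} (by simp [haB]) fun f hf hfF =>
      h.prod_add_map_eq_zero_of_ne_const hd haB hbB hp subset_rfl hTN hf (hfF _ (by simp))
        (hfF _ (by simp)) (hfF univ (by simp))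
  have e : d * (Fintype.card α - #B) - 1 = d * (Fintype.card α - #(insert b B)) - 1 + d := by
    have := Nat.mul_pos (Nat.pos_of_ne_zero hd) (show 0 < Fintype.card α - #(insert b B) by omega)
    rw [show Fintype.card α - #B = Fintype.card α - #(insert b B) + 1 by omega, mul_add_one]
    omega
  rw [sum_pair hTN] at key
  rw [e]
  simp only [hVB, add_tsub_cancel_left, tsub_self, mul_zero, mul_one, Multiset.replicate_zero,
    add_zero, Multiset.map_add, Multiset.prod_add, Multiset.map_replicate,
    Multiset.prod_replicate] at key ⊢
  linear_combination key

theorem prod_mul_pow_mul_pow_add_eq_zero (h : TdnRelations d δ) (hd : d ≠ 0)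
    {p : Multiset (Finset α)} {a b : α} {B T : Finset α} (haB : a ∈ B) (hbB : b ∉ B)
    (hp : 2 ≤ #B → B ∈ p) (hBT : insert b B ⊂ T) (hTN : T ≠ univ) :
    (p.map δ).prod * δ T ^ (d * (#T - #B)) * δ univ ^ (d * (Fintype.card α - #T) - 1) +
      (p.map δ).prod * δ (insert b B) ^ d * δ T ^ (d * (#T - #(insert b B))) *
        δ univ ^ (d * (Fintype.card α - #T) - 1) = 0 := by
  have hab : a ≠ b := by
    rintro rfl
    exact hbB haB
  have hVB : #(insert b B) = #B + 1 := card_insert_of_notMem hbB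
  have hVT := card_lt_card hBT
  have key := h.sum_prod_add_replicate_eq_zero hd hab
    (p + Multiset.replicate (d * (#T - #(insert b B))) T +
      Multiset.replicate (d * (Fintype.card α - #T) - 1) univ)
    {T, insert b B} (by simp [haB, hBT.subset (mem_insert_self b B),
      hBT.subset (mem_insert_of_mem haB)]) fun f hf hfF => ?_
  · have e : d * (#T - #B) = d * (#T - #(insert b B)) + d := by
      rw [← mul_add_one]
      congr 1
      omega
    rw [sum_pair hBT.ne'] at key
    simp only [Multiset.map_add, Multiset.prod_add, Multiset.map_replicate,
      Multiset.prod_replicate] at key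
    rw [e]
    linear_combination key
  rcases eq_or_ne f (fun _ => univ) with rfl | hfN
  · rw [Multiset.map_const', card_val, card_univ, Fintype.card_fin, add_assoc,
      ← Multiset.replicate_add]
    exact h.prod_replicate_add_replicate_univ_eq_zero hd (by omega) hTN
      (Nat.mul_ne_zero hd (by omega)) (by omega)
  · exact h.prod_add_map_eq_zero_of_ne_const hd haB hbB hp hBT.subset hTN hf (hfF T (by simp))
      (hfF _ (by simp)) hfN

theorem prod_mul_pow_mul_pow_eq_neg (h : TdnRelations d δ) (hd : d ≠ 0)
    {p : Multiset (Finset α)} {a : α} {B T : Finset α} (haB : a ∈ B) (hp : 2 ≤ #B → B ∈ p)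
    (hBT : B ⊂ T) (hTN : T ≠ univ) :
    (p.map δ).prod * δ T ^ (d * (#T - #B)) * δ univ ^ (d * (Fintype.card α - #T) - 1) =
      -((p.map δ).prod * δ univ ^ (d * (Fintype.card α - #B) - 1)) := by
  obtain ⟨b, hbT, hbB⟩ := exists_of_ssubset hBT
  have hVT : insert b B ⊆ T := insert_subset hbT hBT.subset
  rcases eq_or_ne (insert b B) T with hVT' | hVT'
  · exact h.prod_mul_pow_mul_pow_eq_neg_of_insert_eq hd haB hbB hp hVT' hTN
  have hVT'' := hVT.ssubset_of_ne hVT'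
  have hVB : #(insert b B) = #B + 1 := card_insert_of_notMem hbB
  have hBT2 : #B + 1 < #T := hVB ▸ card_lt_card hVT''
  have ih₁ := h.prod_mul_pow_mul_pow_eq_neg hd (p := p + Multiset.replicate d (insert b B))
    (mem_insert_of_mem haB) (fun _ => by simp [Multiset.mem_replicate, hd]) hVT'' hTN
  have ih₂ := h.prod_mul_pow_mul_pow_eq_neg hd haB hp (ssubset_insert hbB)
    (hVT''.trans (ssubset_univ_iff.mpr hTN)).ne
  rw [show d * (#(insert b B) - #B) = d by rw [hVB, add_tsub_cancel_left, mul_one]] at ih₂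
  simp only [Multiset.map_add, Multiset.prod_add, Multiset.map_replicate,
    Multiset.prod_replicate] at ih₁
  linear_combination h.prod_mul_pow_mul_pow_add_eq_zero hd haB hbB hp hVT'' hTN - ih₁ + ih₂
termination_by #T - #B
decreasing_by
  all_goals
    rw [card_insert_of_notMem hbB]
    omega

theorem mul_curveClass_self (h : TdnRelations d δ) (hd : d ≠ 0) {T : Finset α} (hT2 : 2 ≤ #T)
    (hTN : T ≠ univ) : δ T * curveClass d δ T = -δ univ ^ (d * (Fintype.card α - 1) - 1) := by
  obtain ⟨a, ha⟩ := card_pos.mp (by omega : 0 < #T)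
  have haT : {a} ⊂ T := (singleton_subset_iff.mpr ha).ssubset_of_ne (by
    rintro rfl
    simp at hT2)
  have hpos : 0 < d * (#T - 1) := Nat.mul_pos (Nat.pos_of_ne_zero hd) (by omega)
  rw [curveClass, ← mul_assoc, ← pow_succ', Nat.sub_add_cancel hpos]
  simpa using h.prod_mul_pow_mul_pow_eq_neg hd (p := 0) (mem_singleton_self a) (by simp) haT hTN

theorem mul_curveClass_of_ssubset (h : TdnRelations d δ) (hd : 1 < d) {S T : Finset α}
    (hS2 : 2 ≤ #S) (hSN : S ≠ univ) (hST : S ⊂ T) : δ S * curveClass d δ T = 0 := by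
  have hSn : #S < Fintype.card α := (card_lt_iff_ne_univ S).mpr hSN
  have hTn : #T ≤ Fintype.card α := card_le_univ T
  have hST' : #S < #T := card_lt_card hST
  have := (h.annihilatesAbove (by omega) hS2 hSN) (Multiset.replicate (d * (#T - 1) - 1) T +
    Multiset.replicate (d * (Fintype.card α - #T) - 1) univ) ?_ ?_
  · simpa only [curveClass, Multiset.map_add, Multiset.prod_add, Multiset.map_replicate,
      Multiset.prod_replicate] using this
  · intro X hX
    simp only [Multiset.mem_add, Multiset.mem_replicate] at hX
    rcases hX with ⟨-, rfl⟩ | ⟨-, rfl⟩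
    · exact hST
    · exact ssubset_univ_iff.mpr hSN
  · have h₁ : d * (#T - 1) + d * (Fintype.card α - #T) = d * (Fintype.card α - 2) + d := by
      rw [← mul_add, ← mul_add_one]
      congr 1
      omega
    have h₂ := Nat.mul_le_mul_left d (show Fintype.card α - #S ≤ Fintype.card α - 2 by omega)
    simp only [Multiset.card_add, Multiset.card_replicate]
    omega

theorem mul_curveClass_of_ssuperset (h : TdnRelations d δ) (hd : 1 < d) {S T : Finset α}
    (hT2 : 2 ≤ #T) (hTN : T ≠ univ) (hTS : T ⊂ S) : δ S * curveClass d δ T = 0 := by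
  have hTn : #T < Fintype.card α := (card_lt_iff_ne_univ T).mpr hTN
  have := (h.annihilatesAbove (by omega) hT2 hTN)
    (S ::ₘ Multiset.replicate (d * (Fintype.card α - #T) - 1) univ) ?_ ?_
  · simp only [Multiset.map_cons, Multiset.prod_cons, Multiset.map_replicate,
      Multiset.prod_replicate] at this
    rw [curveClass_eq_mul hd hT2]
    linear_combination δ T ^ (d * (#T - 1) - 2) * this
  · intro X hX
    simp only [Multiset.mem_cons, Multiset.mem_replicate] at hX
    rcases hX with rfl | ⟨-, rfl⟩
    · exact hTS
    · exact ssubset_univ_iff.mpr hTN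
  · have := Nat.mul_pos (by omega : 0 < d) (show 0 < Fintype.card α - #T by omega)
    simp only [Multiset.card_cons, Multiset.card_replicate]
    omega

theorem mul_curveClass_of_disjoint (h : TdnRelations d δ) (hd : 1 < d) {S T : Finset α}
    (hS2 : 2 ≤ #S) (hT2 : 2 ≤ #T) (hST : Disjoint S T) : δ S * curveClass d δ T = 0 := by
  have hST' : #S + #T ≤ Fintype.card α := by
    rw [← card_union_of_disjoint hST]
    exact card_le_univ _
  have := h.mul_mul_pow_eq_zero_of_disjoint (by omega) hS2 hT2 hST
    (k := d * (Fintype.card α - #T) - 1) (by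
      have := Nat.mul_le_mul_left d
        (show Fintype.card α - #S - #T + 1 + 1 ≤ Fintype.card α - #T by omega)
      rw [mul_add_one, mul_add_one] at this
      omega)
  rw [curveClass_eq_mul hd hT2]
  linear_combination δ T ^ (d * (#T - 1) - 2) * this

theorem mul_curveClass_of_ne (h : TdnRelations d δ) (hd : 1 < d) {S T : Finset α}
    (hS2 : 2 ≤ #S) (hSN : S ≠ univ) (hT2 : 2 ≤ #T) (hTN : T ≠ univ) (hST : S ≠ T) :
    δ S * curveClass d δ T = 0 := by
  by_cases hsub : S ⊂ T
  · exact h.mul_curveClass_of_ssubset hd hS2 hSN hsub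
  by_cases hsup : T ⊂ S
  · exact h.mul_curveClass_of_ssuperset hd hT2 hTN hsup
  by_cases hdisj : Disjoint S T
  · exact h.mul_curveClass_of_disjoint hd hS2 hT2 hdisj
  rw [curveClass_eq_mul hd hT2,
    ← mul_assoc, h.mul_eq_zero_of_overlap S T hS2 hT2 (not_disjoint_iff_nonempty_inter.mp hdisj)
      (inter_subset_left.ssubset_of_ne fun hS => hsub ((inter_eq_left.mp hS).ssubset_of_ne hST))
      (inter_subset_right.ssubset_of_ne fun hT =>
        hsup ((inter_eq_right.mp hT).ssubset_of_ne (Ne.symm hST))), zero_mul]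

end TdnRelations

end

theorem pairing_matrix_identity_general (d n : ℕ) (hd : 1 < d)
    {R : Type*} [CommRing R] (δ : Finset (Fin n) → R)
    (hrel1 : ∀ S T : Finset (Fin n), 2 ≤ S.card → 2 ≤ T.card →
      (S ∩ T).Nonempty → S ∩ T ⊂ S → S ∩ T ⊂ T → δ S * δ T = 0)
    (hrel2 : ∀ a b : Fin n, a ≠ b →
      (∑ S ∈ Finset.univ.filter (fun S : Finset (Fin n) => a ∈ S ∧ b ∈ S), δ S) ^ d = 0)
    (deg : R →+ ℤ)
    (hdeg : deg (δ Finset.univ ^ (d * (n - 1) - 1)) = (-1 : ℤ) ^ (d * (n - 1) - 1))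
    (M : Matrix {S : Finset (Fin n) // 2 ≤ S.card ∧ S ≠ Finset.univ}
                {S : Finset (Fin n) // 2 ≤ S.card ∧ S ≠ Finset.univ} ℤ)
    (hM : ∀ S T, M S T =
      deg (δ S.1 * (δ T.1 ^ (d * (T.1.card - 1) - 1) *
        δ Finset.univ ^ (d * (n - T.1.card) - 1)))) :
    M = ((-1 : ℤ) ^ (d * (n - 1))) • (1 : Matrix _ _ ℤ) ∧ IsUnit M.det := by
  have h : TdnRelations d δ := ⟨hrel1, hrel2⟩
  have hM' : M = ((-1 : ℤ) ^ (d * (n - 1))) • (1 : Matrix _ _ ℤ) := by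
    ext ⟨S, hS2, hSN⟩ ⟨T, hT2, hTN⟩
    rw [hM, Matrix.smul_apply, Matrix.one_apply]
    by_cases hST : S = T
    · subst hST
      have hself := h.mul_curveClass_self (by omega) hS2 hSN
      simp only [curveClass, Fintype.card_fin] at hself
      have hn : 0 < d * (n - 1) := Nat.mul_pos (by omega)
        (by have := (card_lt_iff_ne_univ S).mpr hSN; rw [Fintype.card_fin] at this; omega)
      rw [hself, map_neg, hdeg, if_pos rfl, smul_eq_mul, mul_one, ← Nat.sub_add_cancel hn,
        pow_succ, Nat.add_sub_cancel]
      ring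
    · have hne := h.mul_curveClass_of_ne hd hS2 hSN hT2 hTN hST
      simp only [curveClass, Fintype.card_fin] at hne
      rw [hne, map_zero, if_neg fun h => hST (congrArg Subtype.val h), smul_zero]
  refine ⟨hM', ?_⟩
  rw [hM', Matrix.det_smul, Matrix.det_one, mul_one]
  exact (isUnit_one.neg.pow _).pow _

/-- For `d > 1`, the pairing matrix between the boundary divisor classes `δ_S` and the
one-cycles `C_T = δ_T^{d(|T|-1)-1} · δ_N^{d(n-|T|)-1}` is `(-1)^{d(n-1)}` times the
identity matrix; in particular it is invertible over `ℤ`. -/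
theorem pairing_matrix_identity (d n : ℕ) (hd : 1 < d) (hn : 2 ≤ n)
    {R : Type*} [CommRing R] (δ : Finset (Fin n) → R)
    (hrel1 : ∀ S T : Finset (Fin n), 2 ≤ S.card → 2 ≤ T.card →
      (S ∩ T).Nonempty → S ∩ T ⊂ S → S ∩ T ⊂ T → δ S * δ T = 0)
    (hrel2 : ∀ a b : Fin n, a ≠ b →
      (∑ S ∈ Finset.univ.filter (fun S : Finset (Fin n) => a ∈ S ∧ b ∈ S), δ S) ^ d = 0)
    (deg : R →+ ℤ)
    (hdeg : deg (δ Finset.univ ^ (d * (n - 1) - 1)) = (-1 : ℤ) ^ (d * (n - 1) - 1))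
    (M : Matrix {S : Finset (Fin n) // 2 ≤ S.card ∧ S ≠ Finset.univ}
                {S : Finset (Fin n) // 2 ≤ S.card ∧ S ≠ Finset.univ} ℤ)
    (hM : ∀ S T, M S T =
      deg (δ S.1 * (δ T.1 ^ (d * (T.1.card - 1) - 1) *
        δ Finset.univ ^ (d * (n - T.1.card) - 1)))) :
    M = ((-1 : ℤ) ^ (d * (n - 1))) • (1 : Matrix _ _ ℤ) ∧ IsUnit M.det :=
  pairing_matrix_identity_general d n hd δ hrel1 hrel2 deg hdeg M hM
end
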